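/- Let n ≥ 1, W a linear subspace of ℝⁿ, d, c ∈ ℝⁿ, P = {x ∈ ℝⁿ : x ∈ W + d, x ≥ 0}, D = {s ∈ ℝⁿ : s ∈ W⊥ + c, s ≥ 0}. Assume x⋆ ∈ P, s⋆ ∈ D with ⟨x⋆, s⋆⟩ = 0, and assume strictly feasible points exist: some x° ∈ P with x° > 0 and some s° ∈ D with s° > 0. For g ≥ 0 set P_g = {x ∈ P : ⟨x, s⋆⟩ ≤ g}, D_g = {s ∈ D : ⟨x⋆, s⟩ ≤ g}, and define the max central path coordinates x^m_i(g) = sup{x_i : x ∈ P_g} and s^m_i(g) = sup{s_i : s ∈ D_g}. Then for every g ≥ 0 and every i ∈ [n]: g ≤ x^m_i(g) · s^m_i(g) ≤ 2g. -/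

import Mathlib

open scoped RealInnerProductSpace

/-- The `i`-th coordinate `x^m_i(g)` of the primal max central path:
the supremum of `x i` over primal feasible points `x` with optimality gap at most `g`. -/
noncomputable def primalMCP (n : ℕ) (W : Submodule ℝ (EuclideanSpace ℝ (Fin n)))
    (d sstar : EuclideanSpace ℝ (Fin n)) (g : ℝ) (i : Fin n) : ℝ :=
  sSup {t : ℝ | ∃ x : EuclideanSpace ℝ (Fin n),
    x - d ∈ W ∧ (∀ j, 0 ≤ x j) ∧ ⟪x, sstar⟫ ≤ g ∧ t = x i}

/-- The `i`-th coordinate `s^m_i(g)` of the dual max central path: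
the supremum of `s i` over dual feasible points `s` with optimality gap at most `g`. -/
noncomputable def dualMCP (n : ℕ) (W : Submodule ℝ (EuclideanSpace ℝ (Fin n)))
    (c xstar : EuclideanSpace ℝ (Fin n)) (g : ℝ) (i : Fin n) : ℝ :=
  sSup {t : ℝ | ∃ s : EuclideanSpace ℝ (Fin n),
    s - c ∈ Wᗮ ∧ (∀ j, 0 ≤ s j) ∧ ⟪xstar, s⟫ ≤ g ∧ t = s i}

/-!
The upper bound is weak duality: for `x ∈ P_g` and `s ∈ D_g` we have `x - x⋆ ∈ W` and
`s - s⋆ ∈ W⊥`, so `x i * s i ≤ ⟪x, s⟫ = ⟪x, s⋆⟫ + ⟪x⋆, s⟫ ≤ 2 g`.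

For the lower bound, the strictly feasible points make `P_g` and `D_g` compact, so both suprema are
attained, at `x` and `s` say. Every `M > x i` bounds the linear program `max {x' i | x' ∈ P_g}`,
so Farkas' lemma (separating `(d, g, M)` from a closed convex cone) yields a point of its dual
`min {⟪d, y⟫ + μ g | y ∈ W⊥, μ ≥ 0, y + μ s⋆ ≥ eᵢ}` of value `V < M`. For `g > 0`, moving from `x⋆`
towards `x₀ > 0` gives `x i > 0`, hence `V ≥ x i > 0` by weak duality; then `s⋆ + (g / V) y` lies
in `D_g` and has `i`-th coordinate at least `g / V`, whence `g ≤ V * s i ≤ M * s i`.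
-/

lemma exists_apply_eq_inner_add_mul_add_mul {F : Type*} [NormedAddCommGroup F]
    [InnerProductSpace ℝ F] [CompleteSpace F] (f : StrongDual ℝ (F × ℝ × ℝ)) :
    ∃ (w : F) (α β : ℝ), ∀ v a m, f (v, a, m) = ⟪w, v⟫ + α * a + β * m := by
  refine ⟨(InnerProductSpace.toDual ℝ F).symm (f.comp (.inl ℝ F (ℝ × ℝ))), f (0, 1, 0),
    f (0, 0, 1), fun v a m => ?_⟩
  have hsplit : ((v, a, m) : F × ℝ × ℝ) = (v, 0, 0) + a • (0, 1, 0) + m • (0, 0, 1) := by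
    simp
  rw [hsplit, map_add, map_add, map_smul, map_smul, InnerProductSpace.toDual_symm_apply]
  simp [mul_comm, Prod.zero_eq_mk]

lemma EuclideanSpace.single_one_nonneg {ι : Type*} [DecidableEq ι] (j k : ι) :
    0 ≤ EuclideanSpace.single j (1 : ℝ) k := by
  rw [PiLp.single_apply]
  split_ifs <;> norm_num

namespace MaxCentralPath

variable {ι : Type*} [Fintype ι]

/-- `gapSet W d s⋆ g` is `P_g`; `gapSet W⊥ c x⋆ g` is `D_g` (with the inner product flipped). -/
def gapSet (W : Submodule ℝ (EuclideanSpace ℝ ι)) (d s : EuclideanSpace ℝ ι) (g : ℝ) :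
    Set (EuclideanSpace ℝ ι) :=
  {x | x - d ∈ W ∧ (∀ j, 0 ≤ x j) ∧ ⟪x, s⟫ ≤ g}

variable {W : Submodule ℝ (EuclideanSpace ℝ ι)} {d s x y : EuclideanSpace ℝ ι} {g : ℝ}

lemma gapSet_mono {g' : ℝ} (h : g ≤ g') : gapSet W d s g ⊆ gapSet W d s g' :=
  fun _ ⟨hW, hpos, hgap⟩ => ⟨hW, hpos, hgap.trans h⟩

lemma inner_eq_of_sub_mem (hx : x - d ∈ W) (hy : y ∈ Wᗮ) : ⟪x, y⟫ = ⟪d, y⟫ := by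
  rw [← sub_eq_zero, ← inner_sub_left]
  exact Submodule.inner_right_of_mem_orthogonal hx hy

lemma inner_nonneg_of_nonneg (hx : ∀ j, 0 ≤ x j) (hy : ∀ j, 0 ≤ y j) : 0 ≤ ⟪x, y⟫ := by
  rw [PiLp.inner_apply]
  exact Finset.sum_nonneg fun j _ => mul_nonneg (hy j) (hx j)

lemma mul_le_inner_of_nonneg (hx : ∀ j, 0 ≤ x j) (hy : ∀ j, 0 ≤ y j) (i : ι) :
    x i * y i ≤ ⟪x, y⟫ := by
  rw [PiLp.inner_apply, mul_comm]
  exact Finset.single_le_sum (f := fun j => ⟪x j, y j⟫) (fun j _ => mul_nonneg (hy j) (hx j))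
    (Finset.mem_univ i)

lemma isClosed_setOf_mem_gapSet (W : Submodule ℝ (EuclideanSpace ℝ ι))
    (s : EuclideanSpace ℝ ι) :
    IsClosed {z : EuclideanSpace ℝ ι × EuclideanSpace ℝ ι × ℝ | z.1 ∈ gapSet W z.2.1 s z.2.2} := by
  have hW : IsClosed {z : EuclideanSpace ℝ ι × EuclideanSpace ℝ ι × ℝ | z.1 - z.2.1 ∈ W} :=
    W.closed_of_finiteDimensional.preimage (by fun_prop)
  have hcoord (j : ι) :
      IsClosed {z : EuclideanSpace ℝ ι × EuclideanSpace ℝ ι × ℝ | 0 ≤ z.1 j} :=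
    isClosed_le continuous_const (by fun_prop)
  have hgap : IsClosed {z : EuclideanSpace ℝ ι × EuclideanSpace ℝ ι × ℝ | ⟪z.1, s⟫ ≤ z.2.2} :=
    isClosed_le (by fun_prop) (by fun_prop)
  convert hW.inter ((isClosed_iInter hcoord).inter hgap) using 1
  ext z
  simp [gapSet]

lemma isCompact_nonneg_inner_le {s₀ : EuclideanSpace ℝ ι} (hs₀ : ∀ j, 0 < s₀ j) (R : ℝ) :
    IsCompact {x : EuclideanSpace ℝ ι | (∀ j, 0 ≤ x j) ∧ ⟪x, s₀⟫ ≤ R} := by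
  have hbox : IsCompact (WithLp.toLp 2 '' Set.univ.pi fun j => Set.Icc 0 (R / s₀ j)) :=
    (isCompact_univ_pi fun _ => isCompact_Icc).image (PiLp.continuous_toLp 2 _)
  refine hbox.of_isClosed_subset ?_ fun x ⟨hx, hxR⟩ => ⟨x.ofLp, fun j _ => ⟨hx j, ?_⟩, rfl⟩
  · simp only [Set.ofPred_and, Set.ofPred_forall]
    exact (isClosed_iInter fun j => isClosed_le (by fun_prop) (by fun_prop)).inter
      (isClosed_le (by fun_prop) (by fun_prop))
  · rw [le_div_iff₀ (hs₀ j)]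
    exact (mul_le_inner_of_nonneg hx (fun j => (hs₀ j).le) j).trans hxR

lemma gapSet_subset {s₀ : EuclideanSpace ℝ ι} (hs₀ : s₀ - s ∈ Wᗮ) :
    gapSet W d s g ⊆ {x | (∀ j, 0 ≤ x j) ∧ ⟪x, s₀⟫ ≤ g + ⟪d, s₀ - s⟫} := by
  rintro x ⟨hxd, hx, hgap⟩
  have hshift := inner_eq_of_sub_mem hxd hs₀
  rw [inner_sub_right, inner_sub_right] at hshift
  refine ⟨hx, ?_⟩
  rw [inner_sub_right]
  linarith

lemma isCompact_gapSet {s₀ : EuclideanSpace ℝ ι} (hs₀ : s₀ - s ∈ Wᗮ) (hs₀pos : ∀ j, 0 < s₀ j) :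
    IsCompact (gapSet W d s g) :=
  (isCompact_nonneg_inner_le hs₀pos _).of_isClosed_subset
    ((isClosed_setOf_mem_gapSet W s).preimage
      (by fun_prop : Continuous fun x : EuclideanSpace ℝ ι => (x, d, g)))
    (gapSet_subset hs₀)

lemma exists_mem_gapSet_coord_pos {xstar x₀ : EuclideanSpace ℝ ι}
    (hxstar : xstar ∈ gapSet W d s 0) (hx₀ : x₀ - d ∈ W) (hx₀pos : ∀ j, 0 < x₀ j)
    (hs : ∀ j, 0 ≤ s j) (hg : 0 < g) (i : ι) : ∃ x ∈ gapSet W d s g, 0 < x i := by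
  obtain ⟨hxd, hx, hxs⟩ := hxstar
  have hx₀s : 0 ≤ ⟪x₀, s⟫ := inner_nonneg_of_nonneg (fun j => (hx₀pos j).le) hs
  set t := g / (g + ⟪x₀, s⟫)
  have ht : 0 < t := by positivity
  have ht1 : t ≤ 1 := div_le_one_of_le₀ (by linarith) (by positivity)
  have hcoord (j : ι) : ((1 - t) • xstar + t • x₀) j = (1 - t) * xstar j + t * x₀ j := by
    simp
  refine ⟨(1 - t) • xstar + t • x₀, ⟨?_, fun j => ?_, ?_⟩, ?_⟩
  · have hsub : (1 - t) • xstar + t • x₀ - d = (1 - t) • (xstar - d) + t • (x₀ - d) := by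
      module
    rw [hsub]
    exact add_mem (W.smul_mem _ hxd) (W.smul_mem _ hx₀)
  · rw [hcoord]
    exact add_nonneg (mul_nonneg (by linarith) (hx j)) (mul_nonneg ht.le (hx₀pos j).le)
  · calc ⟪(1 - t) • xstar + t • x₀, s⟫ = (1 - t) * ⟪xstar, s⟫ + t * ⟪x₀, s⟫ := by
          rw [inner_add_left, real_inner_smul_left, real_inner_smul_left]
      _ ≤ t * (g + ⟪x₀, s⟫) := by nlinarith
      _ = g := div_mul_cancel₀ g (by positivity)
  · rw [hcoord]
    exact add_pos_of_nonneg_of_pos (mul_nonneg (by linarith) (hx i)) (mul_pos ht (hx₀pos i))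

def gapCone (W : Submodule ℝ (EuclideanSpace ℝ ι)) (s : EuclideanSpace ℝ ι) (i : ι) :
    PointedCone ℝ (EuclideanSpace ℝ ι × ℝ × ℝ) where
  carrier := {p | ∃ x ∈ gapSet W p.1 s p.2.1, p.2.2 ≤ x i}
  add_mem' := by
    rintro p q ⟨x, ⟨hxW, hx, hxs⟩, hxi⟩ ⟨y, ⟨hyW, hy, hys⟩, hyi⟩
    refine ⟨x + y, ⟨?_, fun j => add_nonneg (hx j) (hy j), ?_⟩, ?_⟩
    · simpa [add_sub_add_comm] using add_mem hxW hyW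
    · simpa [inner_add_left] using add_le_add hxs hys
    · simpa using add_le_add hxi hyi
  zero_mem' := ⟨0, ⟨by simp, fun _ => le_rfl, by simp⟩, by simp⟩
  smul_mem' := by
    rintro ⟨c, hc⟩ p ⟨x, ⟨hxW, hx, hxs⟩, hxi⟩
    refine ⟨c • x, ⟨?_, fun j => ?_, ?_⟩, ?_⟩
    · simpa [← smul_sub] using W.smul_mem c hxW
    · simpa using mul_nonneg hc (hx j)
    · simpa [real_inner_smul_left] using mul_le_mul_of_nonneg_left hxs hc
    · simpa using mul_le_mul_of_nonneg_left hxi hc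

lemma mem_gapCone_of_neg_mem {i : ι} {v : EuclideanSpace ℝ ι} {a m : ℝ} (hv : -v ∈ W)
    (ha : 0 ≤ a) (hm : m ≤ 0) : (v, a, m) ∈ gapCone W s i :=
  ⟨0, ⟨by simpa using hv, fun _ => le_rfl, by simpa using ha⟩, by simpa using hm⟩

lemma single_mem_gapCone [DecidableEq ι] {i j : ι} {m : ℝ}
    (hm : m ≤ EuclideanSpace.single j (1 : ℝ) i) :
    (EuclideanSpace.single j 1, s j, m) ∈ gapCone W s i :=
  ⟨_, ⟨by simp, EuclideanSpace.single_one_nonneg j, by simp [EuclideanSpace.inner_single_left]⟩,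
    hm⟩

open Filter in
lemma isClosed_gapCone {s₀ : EuclideanSpace ℝ ι} (hs₀ : s₀ - s ∈ Wᗮ) (hs₀pos : ∀ j, 0 < s₀ j)
    (i : ι) : IsClosed (gapCone W s i : Set (EuclideanSpace ℝ ι × ℝ × ℝ)) := by
  refine isClosed_of_closure_subset fun p hp => ?_
  obtain ⟨q, hqC, hq⟩ := mem_closure_iff_seq_limit.1 hp
  choose x hx hxi using hqC
  -- `s₀` confines the witnesses `x k` to a compact set, so a subsequence converges.
  obtain ⟨R, hR⟩ : BddAbove (Set.range fun k => (q k).2.1 + ⟪(q k).1, s₀ - s⟫) :=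
    ((Continuous.tendsto (f := fun p : EuclideanSpace ℝ ι × ℝ × ℝ => p.2.1 + ⟪p.1, s₀ - s⟫)
      (by fun_prop) p).comp hq).bddAbove_range
  have hxR (k : ℕ) : x k ∈ {x | (∀ j, 0 ≤ x j) ∧ ⟪x, s₀⟫ ≤ R} :=
    have ⟨hpos, hle⟩ := gapSet_subset hs₀ (hx k)
    ⟨hpos, hle.trans (hR ⟨k, rfl⟩)⟩
  obtain ⟨xlim, -, φ, hφ, hxlim⟩ := (isCompact_nonneg_inner_le hs₀pos R).tendsto_subseq hxR
  have hwitness : IsClosed ({z : EuclideanSpace ℝ ι × EuclideanSpace ℝ ι × ℝ × ℝ |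
      z.1 ∈ gapSet W z.2.1 s z.2.2.1} ∩ {z | z.2.2.2 ≤ z.1 i}) := by
    refine IsClosed.inter ?_ (isClosed_le (by fun_prop) (by fun_prop))
    exact (isClosed_setOf_mem_gapSet W s).preimage
      (f := fun z : EuclideanSpace ℝ ι × EuclideanSpace ℝ ι × ℝ × ℝ => (z.1, z.2.1, z.2.2.1))
      (by fun_prop)
  obtain ⟨hxlim_mem, hxlim_i⟩ :=
    hwitness.mem_of_tendsto (hxlim.prodMk_nhds (hq.comp hφ.tendsto_atTop))
      (Eventually.of_forall fun k => ⟨hx (φ k), hxi (φ k)⟩)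
  exact ⟨xlim, hxlim_mem, hxlim_i⟩

lemma exists_separation_of_notMem_gapCone {s₀ : EuclideanSpace ℝ ι} (hs₀ : s₀ - s ∈ Wᗮ)
    (hs₀pos : ∀ j, 0 < s₀ j) {i : ι} {M : ℝ} (hb : (d, g, M) ∉ gapCone W s i) :
    ∃ (w : EuclideanSpace ℝ ι) (α β : ℝ),
      (∀ v a m, (v, a, m) ∈ gapCone W s i → 0 ≤ ⟪w, v⟫ + α * a + β * m) ∧
      ⟪w, d⟫ + α * g + β * M < 0 := by
  let C : ProperCone ℝ (EuclideanSpace ℝ ι × ℝ × ℝ) :=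
    ⟨gapCone W s i, isClosed_gapCone hs₀ hs₀pos i⟩
  obtain ⟨f, hfC, hfb⟩ := C.hyperplane_separation_point hb
  obtain ⟨w, α, β, hf⟩ := exists_apply_eq_inner_add_mul_add_mul f
  exact ⟨w, α, β, fun v a m h => hf v a m ▸ hfC _ h, hf d g M ▸ hfb⟩

/-- Feasibility for the linear program dual to `max {x i | x ∈ gapSet W d s g}`, whose objective
is `⟪d, y⟫ + μ * g`. -/
def IsDualFeasible (W : Submodule ℝ (EuclideanSpace ℝ ι)) (s : EuclideanSpace ℝ ι) (i : ι)
    (y : EuclideanSpace ℝ ι) (μ : ℝ) : Prop :=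
  y ∈ Wᗮ ∧ 0 ≤ μ ∧ (∀ j, 0 ≤ (y + μ • s) j) ∧ 1 ≤ (y + μ • s) i

lemma IsDualFeasible.coord_le {i : ι} {μ : ℝ} (h : IsDualFeasible W s i y μ)
    (hx : x ∈ gapSet W d s g) : x i ≤ ⟪d, y⟫ + μ * g := by
  obtain ⟨hy, hμ, hz, hzi⟩ := h
  obtain ⟨hxd, hx, hxs⟩ := hx
  calc x i ≤ x i * (y + μ • s) i := le_mul_of_one_le_right (hx i) hzi
    _ ≤ ⟪x, y + μ • s⟫ := mul_le_inner_of_nonneg hx hz i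
    _ = ⟪d, y⟫ + μ * ⟪x, s⟫ := by
      rw [inner_add_right, real_inner_smul_right, inner_eq_of_sub_mem hxd hy]
    _ ≤ ⟪d, y⟫ + μ * g := by gcongr

lemma exists_isDualFeasible_lt {s₀ : EuclideanSpace ℝ ι} (hs₀ : s₀ - s ∈ Wᗮ)
    (hs₀pos : ∀ j, 0 < s₀ j) (hne : (gapSet W d s g).Nonempty) {i : ι} {M : ℝ}
    (hM : ∀ x ∈ gapSet W d s g, x i < M) :
    ∃ y μ, IsDualFeasible W s i y μ ∧ ⟪d, y⟫ + μ * g < M := by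
  classical
  obtain ⟨w, α, β, hC, hb⟩ := exists_separation_of_notMem_gapCone hs₀ hs₀pos (i := i) (M := M)
    fun ⟨x, hx, hxi⟩ => (hM x hx).not_ge hxi
  have hwj (j : ι) : ⟪w, EuclideanSpace.single j 1⟫ = w j := by
    simp [EuclideanSpace.inner_single_right]
  have hw : w ∈ Wᗮ := by
    refine (Submodule.mem_orthogonal' W w).2 fun v hv => le_antisymm ?_ ?_
    · have hneg := hC _ _ _ (mem_gapCone_of_neg_mem (v := -v) (by simpa using hv) le_rfl le_rfl)
      simpa [inner_neg_right] using hneg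
    · simpa using hC _ _ _ (mem_gapCone_of_neg_mem (neg_mem hv) le_rfl le_rfl)
  have hα : 0 ≤ α := by
    simpa using hC _ _ _ (mem_gapCone_of_neg_mem (v := 0) (by simp) zero_le_one le_rfl)
  have hβ : 0 < -β := by
    have hβ : 0 ≤ -β := by
      simpa using hC _ _ _ (mem_gapCone_of_neg_mem (v := 0) (by simp) le_rfl neg_one_lt_zero.le)
    obtain ⟨x, hx⟩ := hne
    have hfeas := hC d g 0 ⟨x, hx, hx.2.1 i⟩
    refine hβ.lt_of_ne fun hβ0 => ?_
    simp only [neg_eq_zero.1 hβ0.symm, zero_mul, add_zero] at hfeas hb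
    linarith
  have hcoord (j : ι) : ((-β)⁻¹ • w + ((-β)⁻¹ * α) • s) j = (-β)⁻¹ * (w j + α * s j) := by
    simp only [PiLp.add_apply, PiLp.smul_apply, smul_eq_mul]
    ring
  refine ⟨(-β)⁻¹ • w, (-β)⁻¹ * α,
    ⟨W.orthogonal.smul_mem _ hw, by positivity, fun j => ?_, ?_⟩, ?_⟩
  · have hj := hC _ _ _ (single_mem_gapCone (j := j) (EuclideanSpace.single_one_nonneg j i))
    rw [hwj, mul_zero, add_zero] at hj
    rw [hcoord]
    positivity
  · have hi := hC _ _ _ (single_mem_gapCone (j := i) (m := 1) (by simp))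
    rw [hwj, mul_one] at hi
    rw [hcoord, le_inv_mul_iff₀ hβ]
    linarith
  · rw [real_inner_smul_right, real_inner_comm, mul_assoc, ← mul_add, inv_mul_lt_iff₀ hβ]
    linarith

lemma IsDualFeasible.exists_mem_gapSet_orthogonal {c xstar sstar : EuclideanSpace ℝ ι}
    {i : ι} {μ : ℝ} (h : IsDualFeasible W sstar i y μ) (hxstar : xstar ∈ gapSet W d sstar 0)
    (hsstar : sstar ∈ gapSet Wᗮ c xstar 0) (hg : 0 ≤ g) (hV : 0 < ⟪d, y⟫ + μ * g) :
    ∃ s ∈ gapSet Wᗮ c xstar g, g / (⟪d, y⟫ + μ * g) ≤ s i := by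
  obtain ⟨hy, hμ, hz, hzi⟩ := h
  obtain ⟨hxd, hx, hxs⟩ := hxstar
  obtain ⟨hsc, hs, hsx⟩ := hsstar
  set τ := g / (⟪d, y⟫ + μ * g)
  have hτ : 0 ≤ τ := by positivity
  have hdy : 0 ≤ ⟪d, y⟫ := by
    have hxz := inner_nonneg_of_nonneg hx hz
    rw [inner_add_right, real_inner_smul_right, inner_eq_of_sub_mem hxd hy] at hxz
    nlinarith
  have hτμ : τ * μ ≤ 1 := by
    rw [div_mul_eq_mul_div, div_le_one hV]
    linarith
  have hcoord (j : ι) :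
      (sstar + τ • y) j = (1 - τ * μ) * sstar j + τ * (y + μ • sstar) j := by
    simp only [PiLp.add_apply, PiLp.smul_apply, smul_eq_mul]
    ring
  refine ⟨sstar + τ • y, ⟨?_, fun j => ?_, ?_⟩, ?_⟩
  · simpa [add_sub_right_comm] using add_mem hsc (W.orthogonal.smul_mem τ hy)
  · rw [hcoord]
    exact add_nonneg (mul_nonneg (by linarith) (hs j)) (mul_nonneg hτ (hz j))
  · calc ⟪sstar + τ • y, xstar⟫ = ⟪sstar, xstar⟫ + τ * ⟪d, y⟫ := by
          rw [inner_add_left, real_inner_smul_left, real_inner_comm xstar y,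
            inner_eq_of_sub_mem hxd hy]
      _ ≤ τ * (⟪d, y⟫ + μ * g) := by nlinarith [mul_nonneg (mul_nonneg hτ hμ) hg]
      _ = g := div_mul_cancel₀ g hV.ne'
  · rw [hcoord]
    nlinarith [hs i]

lemma coord_mul_coord_le {c xstar sstar : EuclideanSpace ℝ ι}
    (hxstar : xstar ∈ gapSet W d sstar 0) (hsstar : sstar ∈ gapSet Wᗮ c xstar 0)
    (hx : x ∈ gapSet W d sstar g) (hs : s ∈ gapSet Wᗮ c xstar g) (i : ι) :
    x i * s i ≤ 2 * g := by
  obtain ⟨hxd, hx, hxs⟩ := hx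
  obtain ⟨hsc, hs, hsx⟩ := hs
  have hgap := inner_eq_of_sub_mem (sub_sub_sub_cancel_right x xstar d ▸ sub_mem hxd hxstar.1)
    (sub_sub_sub_cancel_right s sstar c ▸ sub_mem hsc hsstar.1)
  rw [inner_sub_right, inner_sub_right, real_inner_comm s xstar] at hgap
  have hopt := inner_nonneg_of_nonneg hxstar.2.1 hsstar.2.1
  calc x i * s i ≤ ⟪x, s⟫ := mul_le_inner_of_nonneg hx hs i
    _ ≤ 2 * g := by linarith

lemma le_coord_mul_coord {c xstar sstar x₀ s₀ : EuclideanSpace ℝ ι}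
    (hxstar : xstar ∈ gapSet W d sstar 0) (hsstar : sstar ∈ gapSet Wᗮ c xstar 0)
    (hx₀ : x₀ - d ∈ W) (hx₀pos : ∀ j, 0 < x₀ j) (hs₀ : s₀ - sstar ∈ Wᗮ) (hs₀pos : ∀ j, 0 < s₀ j)
    (hg : 0 ≤ g) {i : ι} (hx : x ∈ gapSet W d sstar g)
    (hxmax : IsMaxOn (fun x => x i) (gapSet W d sstar g) x) (hs : s ∈ gapSet Wᗮ c xstar g)
    (hsmax : IsMaxOn (fun s => s i) (gapSet Wᗮ c xstar g) s) :
    g ≤ x i * s i := by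
  rcases hg.eq_or_lt with rfl | hg
  · exact mul_nonneg (hx.2.1 i) (hs.2.1 i)
  obtain ⟨x', hx', hx'i⟩ := exists_mem_gapSet_coord_pos hxstar hx₀ hx₀pos hsstar.2.1 hg i
  have hxi : 0 < x i := hx'i.trans_le (hxmax hx')
  have hbound (M : ℝ) (hM : x i < M) : g ≤ M * s i := by
    obtain ⟨y, μ, hyμ, hV⟩ :=
      exists_isDualFeasible_lt hs₀ hs₀pos ⟨x, hx⟩ fun x' hx' => (hxmax hx').trans_lt hM
    have hxV := hyμ.coord_le hx
    obtain ⟨s', hs', hs'i⟩ :=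
      hyμ.exists_mem_gapSet_orthogonal hxstar hsstar hg.le (hxi.trans_le hxV)
    have hgV := (div_le_iff₀ (hxi.trans_le hxV)).1 (hs'i.trans (hsmax hs'))
    nlinarith [hs.2.1 i]
  have hsi : 0 < s i := by nlinarith [hbound (x i + 1) (lt_add_one _)]
  rw [← div_le_iff₀ hsi]
  exact le_of_forall_gt_imp_ge_of_dense fun M hM => (div_le_iff₀ hsi).2 (hbound M hM)

end MaxCentralPath

open MaxCentralPath

lemma dualMCP_eq_primalMCP_orthogonal (n : ℕ) (W : Submodule ℝ (EuclideanSpace ℝ (Fin n)))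
    (c xstar : EuclideanSpace ℝ (Fin n)) (g : ℝ) (i : Fin n) :
    dualMCP n W c xstar g i = primalMCP n Wᗮ c xstar g i := by
  simp only [dualMCP, primalMCP, real_inner_comm xstar]

lemma exists_isMaxOn_eq_primalMCP {n : ℕ} {W : Submodule ℝ (EuclideanSpace ℝ (Fin n))}
    {d s s₀ : EuclideanSpace ℝ (Fin n)} {g : ℝ} (hs₀ : s₀ - s ∈ Wᗮ) (hs₀pos : ∀ j, 0 < s₀ j)
    (hne : (gapSet W d s g).Nonempty) (i : Fin n) :
    ∃ x ∈ gapSet W d s g, IsMaxOn (fun x => x i) (gapSet W d s g) x ∧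
      primalMCP n W d s g i = x i := by
  obtain ⟨x, hx, hmax⟩ :=
    (isCompact_gapSet hs₀ hs₀pos).exists_isMaxOn hne (f := fun x => x i) (by fun_prop)
  refine ⟨x, hx, hmax, IsGreatest.csSup_eq ⟨⟨x, hx.1, hx.2.1, hx.2.2, rfl⟩, ?_⟩⟩
  rintro _ ⟨y, hyd, hy, hys, rfl⟩
  exact hmax ⟨hyd, hy, hys⟩

theorem statement10_general (n : ℕ)
    (W : Submodule ℝ (EuclideanSpace ℝ (Fin n)))
    (d c xstar sstar x₀ s₀ : EuclideanSpace ℝ (Fin n))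
    (hxstarW : xstar - d ∈ W) (hxstarpos : ∀ i, 0 ≤ xstar i)
    (hsstarW : sstar - c ∈ Wᗮ) (hsstarpos : ∀ i, 0 ≤ sstar i)
    (hopt : ⟪xstar, sstar⟫ = 0)
    (hx₀W : x₀ - d ∈ W) (hx₀pos : ∀ i, 0 < x₀ i)
    (hs₀W : s₀ - c ∈ Wᗮ) (hs₀pos : ∀ i, 0 < s₀ i)
    (g : ℝ) (hg : 0 ≤ g) :
    ∀ i : Fin n,
      g ≤ primalMCP n W d sstar g i * dualMCP n W c xstar g i ∧
      primalMCP n W d sstar g i * dualMCP n W c xstar g i ≤ 2 * g := by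
  intro i
  have hxstar : xstar ∈ gapSet W d sstar 0 := ⟨hxstarW, hxstarpos, hopt.le⟩
  have hsstar : sstar ∈ gapSet Wᗮ c xstar 0 :=
    ⟨hsstarW, hsstarpos, (real_inner_comm xstar sstar ▸ hopt).le⟩
  have hs₀ : s₀ - sstar ∈ Wᗮ := sub_sub_sub_cancel_right s₀ sstar c ▸ sub_mem hs₀W hsstarW
  have hx₀ : x₀ - xstar ∈ Wᗮᗮ := by
    rw [W.orthogonal_orthogonal]
    exact sub_sub_sub_cancel_right x₀ xstar d ▸ sub_mem hx₀W hxstarW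
  obtain ⟨x, hx, hxmax, hxeq⟩ :=
    exists_isMaxOn_eq_primalMCP hs₀ hs₀pos ⟨xstar, gapSet_mono hg hxstar⟩ i
  obtain ⟨s, hs, hsmax, hseq⟩ :=
    exists_isMaxOn_eq_primalMCP hx₀ hx₀pos ⟨sstar, gapSet_mono hg hsstar⟩ i
  rw [dualMCP_eq_primalMCP_orthogonal, hxeq, hseq]
  exact ⟨le_coord_mul_coord hxstar hsstar hx₀W hx₀pos hs₀ hs₀pos hg hx hxmax hs hsmax,
    coord_mul_coord_le hxstar hsstar hx hs i⟩

theorem statement10 (n : ℕ) (hn : 1 ≤ n)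
    (W : Submodule ℝ (EuclideanSpace ℝ (Fin n)))
    (d c xstar sstar x₀ s₀ : EuclideanSpace ℝ (Fin n))
    (hxstarW : xstar - d ∈ W) (hxstarpos : ∀ i, 0 ≤ xstar i)
    (hsstarW : sstar - c ∈ Wᗮ) (hsstarpos : ∀ i, 0 ≤ sstar i)
    (hopt : ⟪xstar, sstar⟫ = 0)
    (hx₀W : x₀ - d ∈ W) (hx₀pos : ∀ i, 0 < x₀ i)
    (hs₀W : s₀ - c ∈ Wᗮ) (hs₀pos : ∀ i, 0 < s₀ i)
    (g : ℝ) (hg : 0 ≤ g) :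
    ∀ i : Fin n,
      g ≤ primalMCP n W d sstar g i * dualMCP n W c xstar g i ∧
      primalMCP n W d sstar g i * dualMCP n W c xstar g i ≤ 2 * g :=
  statement10_general n W d c xstar sstar x₀ s₀ hxstarW hxstarpos hsstarW hsstarpos hopt hx₀W hx₀pos
    hs₀W hs₀pos g hg
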